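/- Let W₀ : ℝ^{3×3} → ℝ be twice continuously differentiable on a neighborhood of Id, with W₀(Id) = 0 and W₀(F) ≥ c₀ · dist(F, SO(3))² for some constant c₀ > 0 and all F ∈ ℝ^{3×3}. Then DW₀(Id) = 0 and the second Fréchet derivative satisfies D²W₀(Id)(F̃, F̃) ≥ 2c₀·|sym F̃|² for every F̃ ∈ ℝ^{3×3}. -/

import Mathlib

noncomputable section

attribute [local instance]
  Matrix.frobeniusSeminormedAddCommGroup
  Matrix.frobeniusNormedAddCommGroup
  Matrix.frobeniusNormedSpace

/-- The `3 × 3` real matrices, equipped (locally) with the Frobenius norm. -/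
abbrev M3 : Type := Matrix (Fin 3) (Fin 3) ℝ

/-- The symmetric part `sym F = ½ (F + Fᵀ)`. -/
def symPart (F : M3) : M3 := (2⁻¹ : ℝ) • (F + F.transpose)

/-- The special orthogonal group `SO(3)` as a subset of the `3 × 3` matrices. -/
def SO3 : Set M3 := {R : M3 | R.transpose * R = 1 ∧ R.det = 1}

/-!
The identity is a global minimum of `W₀ ≥ 0`, so `DW₀(1) = 0` and the second-order Taylor
expansion reads `W₀(1 + tF) = t²/2 · D²W₀(1)(F, F) + o(t²)`. For orthogonal `R`,
`sym(1 + H - R) = sym H + ½ (1 - R)ᵀ(1 - R)`: the rotations only move `1` to second order in the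
symmetric direction, whence `dist(1 + H, SO(3)) ≥ |sym H| - 2|H|²`. By coercivity
`W₀(1 + tF) ≥ c₀ t² |sym F|² + O(t³)`; divide by `t²` and let `t → 0⁺`.
-/

open Filter Topology Asymptotics Metric

section Taylor

variable {E F : Type*} [NormedAddCommGroup E] [NormedSpace ℝ E] [NormedAddCommGroup F]
  [NormedSpace ℝ F] {f : E → F} {x : E}

theorem isLittleO_taylor_two_of_eventually_differentiableAt
    (hf : ∀ᶠ y in 𝓝 x, DifferentiableAt ℝ f y) (hf' : DifferentiableAt ℝ (fderiv ℝ f) x)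
    (v : E) :
    (fun t : ℝ => f (x + t • v) - f x - t • fderiv ℝ f x v
        - (t ^ 2 / 2) • fderiv ℝ (fderiv ℝ f) x v v) =o[𝓝[>] 0] fun t => t ^ 2 := by
  obtain ⟨r, hr, hball⟩ := eventually_nhds_iff_ball.mp hf
  have hint : interior (ball x r) = ball x r := isOpen_ball.interior_eq
  -- `Convex.taylor_approx_two_segment` needs `x + v` in the ball: expand along `ε • v`, rescale.
  obtain ⟨ε, hε, hεv⟩ : ∃ ε : ℝ, 0 < ε ∧ ‖ε • v‖ < r := by
    refine ⟨r / (2 * (‖v‖ + 1)), by positivity, ?_⟩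
    rw [norm_smul, Real.norm_of_nonneg (by positivity), div_mul_eq_mul_div, div_lt_iff₀ (by positivity)]
    nlinarith [norm_nonneg v]
  have hsmall := (convex_ball x r).taylor_approx_two_segment (v := 0) (w := ε • v)
    (fun y hy => (hball y (hint ▸ hy)).hasFDerivAt) (mem_ball_self hr)
    hf'.hasFDerivAt.hasFDerivWithinAt (by simpa [hint] using hr)
    (by simpa [hint, mem_ball, dist_eq_norm] using hεv)
  have hscale : Tendsto (fun t : ℝ => ε⁻¹ * t) (𝓝[>] 0) (𝓝[>] 0) :=
    tendsto_nhdsWithin_iff.2 ⟨((continuous_const_mul _).tendsto' 0 0 (by simp)).mono_left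
      nhdsWithin_le_nhds, eventually_nhdsWithin_of_forall fun t (ht : 0 < t) => by
        simp only [Set.mem_Ioi]; positivity⟩
  refine ((hsmall.comp_tendsto hscale).trans_isBigO ?_).congr_left fun t => ?_
  · exact (isBigO_const_mul_self (ε⁻¹ ^ 2) _ _).congr_left fun t => by simp [mul_pow]
  · simp only [Function.comp_apply, smul_zero, add_zero, map_zero, zero_apply,
      map_smul, smul_apply, smul_smul, sub_zero]
    field_simp

theorem tendsto_div_sq_of_fderiv_eq_zero {f : E → ℝ}
    (hf : ∀ᶠ y in 𝓝 x, DifferentiableAt ℝ f y) (hf' : DifferentiableAt ℝ (fderiv ℝ f) x)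
    (h₀ : f x = 0) (h₁ : fderiv ℝ f x = 0) (v : E) :
    Tendsto (fun t : ℝ => f (x + t • v) / t ^ 2) (𝓝[>] 0)
      (𝓝 (fderiv ℝ (fderiv ℝ f) x v v / 2)) := by
  have h := (isLittleO_taylor_two_of_eventually_differentiableAt hf hf' v).tendsto_div_nhds_zero
  simp only [h₀, h₁, sub_zero, zero_apply, smul_eq_mul] at h
  refine zero_add (fderiv ℝ (fderiv ℝ f) x v v / 2) ▸ (h.add_const _).congr' ?_
  filter_upwards [self_mem_nhdsWithin] with t (ht : 0 < t)
  field_simp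
  ring

end Taylor

lemma symPart_smul (t : ℝ) (X : M3) : symPart (t • X) = t • symPart X := by
  simp only [symPart, Matrix.transpose_smul, smul_add, smul_smul, mul_comm]

lemma norm_symPart_le (X : M3) : ‖symPart X‖ ≤ ‖X‖ := by
  calc ‖symPart X‖ ≤ 2⁻¹ * (‖X‖ + ‖X.transpose‖) := by
        rw [symPart, norm_smul, Real.norm_of_nonneg (by norm_num)]
        gcongr
        exact norm_add_le _ _
    _ = ‖X‖ := by rw [Matrix.frobenius_norm_transpose]; ring

lemma norm_transpose_mul_self_le (A : M3) : ‖A.transpose * A‖ ≤ ‖A‖ ^ 2 := by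
  simpa [sq, Matrix.frobenius_norm_transpose] using Matrix.frobenius_norm_mul A.transpose A

lemma symPart_one_add_sub {R : M3} (hR : R.transpose * R = 1) (H : M3) :
    symPart (1 + H - R) = symPart H + (2⁻¹ : ℝ) • ((1 - R).transpose * (1 - R)) := by
  have h : (1 - R).transpose * (1 - R) = 1 - R.transpose - R + R.transpose * R := by
    rw [Matrix.transpose_sub, Matrix.transpose_one]
    noncomm_ring
  rw [h, hR, symPart, symPart, Matrix.transpose_sub, Matrix.transpose_add, Matrix.transpose_one]
  module

lemma norm_symPart_sub_le_norm_one_add_sub {R : M3} (hR : R.transpose * R = 1) (H : M3) :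
    ‖symPart H‖ - 2⁻¹ * ‖(1 : M3) - R‖ ^ 2 ≤ ‖1 + H - R‖ :=
  calc ‖symPart H‖ - 2⁻¹ * ‖(1 : M3) - R‖ ^ 2
      ≤ ‖symPart H‖ - ‖(2⁻¹ : ℝ) • ((1 - R).transpose * (1 - R))‖ := by
        rw [norm_smul, Real.norm_of_nonneg (by norm_num)]
        gcongr
        exact norm_transpose_mul_self_le _
    _ ≤ ‖symPart (1 + H - R)‖ := by
        rw [symPart_one_add_sub hR]
        exact norm_sub_le_norm_add _ _
    _ ≤ ‖1 + H - R‖ := norm_symPart_le _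

lemma one_mem_SO3 : (1 : M3) ∈ SO3 := ⟨by simp, by simp⟩

lemma norm_symPart_sub_le_infDist_one_add_SO3 (H : M3) :
    ‖symPart H‖ - 2 * ‖H‖ ^ 2 ≤ infDist (1 + H) SO3 := by
  refine (le_infDist ⟨1, one_mem_SO3⟩).2 fun R hR => ?_
  rw [dist_eq_norm]
  have hsym := norm_symPart_sub_le_norm_one_add_sub hR.1 H
  have hsymH := norm_symPart_le H
  have htri : ‖(1 : M3) - R‖ - ‖H‖ ≤ ‖1 + H - R‖ := by
    simpa [sub_add_eq_add_sub] using norm_sub_le_norm_add (1 - R) H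
  rcases le_or_gt ‖1 - R‖ (2 * ‖H‖) with hclose | hfar
  · nlinarith [norm_nonneg (1 - R)]
  · nlinarith [norm_nonneg H]

theorem statement8 (W₀ : M3 → ℝ) (c₀ : ℝ) (hc₀ : 0 < c₀)
    (hW₀C2 : ContDiffAt ℝ 2 W₀ 1)
    (hW₀id : W₀ 1 = 0)
    (hW₀coer : ∀ F : M3, W₀ F ≥ c₀ * Metric.infDist F SO3 ^ 2) :
    fderiv ℝ W₀ 1 = 0 ∧
      ∀ F' : M3, fderiv ℝ (fderiv ℝ W₀) 1 F' F' ≥ 2 * c₀ * ‖symPart F'‖ ^ 2 := by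
  have hW₀nonneg (F : M3) : 0 ≤ W₀ F := (hW₀coer F).trans' (by positivity)
  have hD1 : fderiv ℝ W₀ 1 = 0 :=
    IsLocalMin.fderiv_eq_zero (.of_forall fun F => hW₀id ▸ hW₀nonneg F)
  refine ⟨hD1, fun F => ?_⟩
  have hdiff : ∀ᶠ y in 𝓝 1, DifferentiableAt ℝ W₀ y :=
    (hW₀C2.eventually (by simp)).mono fun y hy => hy.differentiableAt (by simp)
  have hdiff' : DifferentiableAt ℝ (fderiv ℝ W₀) 1 :=
    (hW₀C2.fderiv_right (m := 1) (by norm_num)).differentiableAt (by simp)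
  set a := ‖symPart F‖
  set b := ‖F‖ ^ 2
  have hlower : ∀ᶠ t in 𝓝[>] 0, c₀ * max (a - 2 * t * b) 0 ^ 2 ≤ W₀ (1 + t • F) / t ^ 2 := by
    filter_upwards [self_mem_nhdsWithin] with t (ht : 0 < t)
    have hdist : t * max (a - 2 * t * b) 0 ≤ infDist (1 + t • F) SO3 := by
      rw [mul_max_of_nonneg _ _ ht.le, mul_zero]
      refine max_le ?_ infDist_nonneg
      have h := norm_symPart_sub_le_infDist_one_add_SO3 (t • F)
      rw [symPart_smul, norm_smul, norm_smul, Real.norm_of_nonneg ht.le] at h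
      linear_combination h
    rw [le_div_iff₀ (by positivity)]
    calc c₀ * max (a - 2 * t * b) 0 ^ 2 * t ^ 2 = c₀ * (t * max (a - 2 * t * b) 0) ^ 2 := by ring
      _ ≤ c₀ * infDist (1 + t • F) SO3 ^ 2 := by gcongr
      _ ≤ W₀ (1 + t • F) := hW₀coer _
  have hlim : Tendsto (fun t => c₀ * max (a - 2 * t * b) 0 ^ 2) (𝓝[>] 0) (𝓝 (c₀ * a ^ 2)) := by
    have h : ContinuousAt (fun t => c₀ * max (a - 2 * t * b) 0 ^ 2) 0 := by fun_prop
    simpa [a, max_eq_left (norm_nonneg _)] using h.tendsto.mono_left nhdsWithin_le_nhds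
  have hQ : c₀ * a ^ 2 ≤ fderiv ℝ (fderiv ℝ W₀) 1 F F / 2 := le_of_tendsto_of_tendsto hlim
    (tendsto_div_sq_of_fderiv_eq_zero hdiff hdiff' hW₀id hD1 F) hlower
  linarith

end
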